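/- arXiv:1905.04001 — 7 statements merged into one kernel-verified Lean document; each statement's English description precedes it below -/
import Mathlib

section
/- Suppose x ∈ G satisfies f(−x) = ⊤ and f(x) < ⊤. Then for every positive integer n one has f(n • x) = f(x) and f(−(n • x)) = ⊤; moreover n • x ≠ 0 for every positive integer n, i.e. x has infinite order in G. (Abstract form of the paper's Corollary: if r₀(Y) < ∞ and r₀(−Y) = ∞ then r₀(n[Y]) = r₀(Y) < ∞, r₀(−n[Y]) = ∞, and [Y] has infinite order in Θ³_ℤ.) -/
/-! Superadditivity of `min` gives `f x ≤ f (n • x)`, so `f (-(n • x)) ≥ f (-x) = ⊤`. Conversely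
`x = (n + 1) • x + (-(n • x))` with `f (-(n • x)) = ⊤` gives `f ((n + 1) • x) ≤ f x`. Finally
`n • x = 0` would force `f x = f 0 = ⊤`. -/

open scoped ENNReal

section MinSuperadditive

variable {G : Type*} {f : G → ℝ≥0∞}

theorem le_apply_nsmul [AddMonoid G] (hf : ∀ x y : G, min (f x) (f y) ≤ f (x + y))
    (h0 : f 0 = ⊤) (x : G) : ∀ n : ℕ, f x ≤ f (n • x)
  | 0 => by simp [h0]
  | n + 1 =>
    calc f x ≤ min (f (n • x)) (f x) := le_min (le_apply_nsmul hf h0 x n) le_rfl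
      _ ≤ f ((n + 1) • x) := by rw [succ_nsmul]; exact hf _ _

theorem apply_neg_nsmul_eq_top [AddGroup G] (hf : ∀ x y : G, min (f x) (f y) ≤ f (x + y))
    (h0 : f 0 = ⊤) {x : G} (hx : f (-x) = ⊤) (n : ℕ) : f (-(n • x)) = ⊤ := by
  rw [← neg_nsmul]
  exact top_le_iff.mp (hx ▸ le_apply_nsmul hf h0 (-x) n)

theorem apply_add_le_of_apply_neg_eq_top [AddGroup G]
    (hf : ∀ x y : G, min (f x) (f y) ≤ f (x + y)) (a : G) {b : G} (hb : f (-b) = ⊤) :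
    f (a + b) ≤ f a :=
  calc f (a + b) = min (f (a + b)) (f (-b)) := by rw [hb, min_top_right]
    _ ≤ f a := by simpa using hf (a + b) (-b)

theorem apply_nsmul_le_of_apply_neg_eq_top [AddGroup G]
    (hf : ∀ x y : G, min (f x) (f y) ≤ f (x + y)) (h0 : f 0 = ⊤) {x : G}
    (hx : f (-x) = ⊤) {n : ℕ} (hn : 0 < n) : f (n • x) ≤ f x := by
  obtain ⟨m, rfl⟩ : ∃ m, n = m + 1 := ⟨n - 1, by omega⟩
  rw [succ_nsmul']
  exact apply_add_le_of_apply_neg_eq_top hf x (apply_neg_nsmul_eq_top hf h0 hx m)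

end MinSuperadditive

/-- Abstract form of the corollary: if `f(-x) = ⊤` and `f(x) < ⊤`, then for every positive
integer `n` one has `f(n • x) = f(x)`, `f(-(n • x)) = ⊤`, and `n • x ≠ 0` (so `x` has
infinite order). -/
theorem stmt_1 {G : Type*} [AddCommGroup G] (f : G → ℝ≥0∞)
    (hf : ∀ x y : G, min (f x) (f y) ≤ f (x + y)) (h0 : f 0 = ⊤)
    (x : G) (hx : f (-x) = ⊤) (hfin : f x < ⊤) :
    ∀ n : ℕ, 0 < n → f (n • x) = f x ∧ f (-(n • x)) = ⊤ ∧ n • x ≠ 0 := by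
  intro n hn
  have heq : f (n • x) = f x :=
    le_antisymm (apply_nsmul_le_of_apply_neg_eq_top hf h0 hx hn) (le_apply_nsmul hf h0 x n)
  refine ⟨heq, apply_neg_nsmul_eq_top hf h0 hx n, fun hzero => ?_⟩
  rw [hzero, h0] at heq
  exact hfin.ne heq.symm
end

section
/- Let m ≥ 1, let x₁, …, x_m ∈ G, and let n₁, …, n_m be integers with n_m > 0. Assume f(−x_m) = ⊤ and, for every k with 1 ≤ k < m, f(x_m) < f(x_k) and f(x_m) < f(−x_k). Then f(n₁ • x₁ + ⋯ + n_m • x_m) = f(x_m). (Abstract form of the paper's Theorem: if r₀(Y_m) < min_{k<m}{r₀(Y_k), r₀(−Y_k)}, r₀(−Y_m) = ∞ and n_m > 0, then r₀(∑ n_k[Y_k]) = r₀(Y_m).) -/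
open scoped ENNReal

/-!
The superlevel sets `{y | t ≤ f y}` are closed under addition, so `f` behaves like a
non-archimedean valuation: if `f a < f b` and `f a < f (-b)` then `f (a + b) = f a`
(the "isosceles" principle). All terms `n k • x k` with `k` not last, and their negatives,
have value strictly above `f (x last)`, while `f (-x last) = ⊤` forces
`f (n • x last) = f (x last)` for `n > 0`; absorbing the other terms one at a time gives the result.
-/

section MinSuperadditive

variable {G : Type*} [AddCommGroup G] {f : G → ℝ≥0∞}

theorem apply_le_apply_nsmul (hf : ∀ x y : G, min (f x) (f y) ≤ f (x + y)) (x : G)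
    {k : ℕ} (hk : 1 ≤ k) : f x ≤ f (k • x) := by
  induction k, hk using Nat.le_induction with
  | base => rw [one_smul]
  | succ k _ ih =>
    calc f x ≤ min (f (k • x)) (f x) := le_min ih le_rfl
      _ ≤ f (k • x + x) := hf _ _
      _ = f ((k + 1) • x) := by rw [succ_nsmul]

theorem apply_le_apply_zsmul_of_pos (hf : ∀ x y : G, min (f x) (f y) ≤ f (x + y)) (x : G)
    {n : ℤ} (hn : 0 < n) : f x ≤ f (n • x) := by
  lift n to ℕ using hn.le
  rw [natCast_zsmul]
  exact apply_le_apply_nsmul hf x (by omega)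

theorem min_le_apply_zsmul (hf : ∀ x y : G, min (f x) (f y) ≤ f (x + y)) (x : G) (n : ℤ) :
    min (f x) (f (-x)) ≤ f (n • x) := by
  rcases lt_trichotomy n 0 with hn | rfl | hn
  · rw [← neg_neg n, neg_zsmul, ← zsmul_neg]
    exact (min_le_right _ _).trans (apply_le_apply_zsmul_of_pos hf (-x) (by omega))
  · simpa using hf x (-x)
  · exact (min_le_left _ _).trans (apply_le_apply_zsmul_of_pos hf x hn)

theorem apply_zsmul_eq_of_apply_neg_eq_top (hf : ∀ x y : G, min (f x) (f y) ≤ f (x + y))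
    {x : G} (hx : f (-x) = ⊤) {n : ℤ} (hn : 0 < n) : f (n • x) = f x := by
  refine le_antisymm ?_ (apply_le_apply_zsmul_of_pos hf x hn)
  rcases eq_or_lt_of_le (show 1 ≤ n by omega) with rfl | hn1
  · rw [one_smul]
  · -- `x = n • x + (n - 1) • (-x)` and the second summand has value `⊤`
    have htop : f ((n - 1) • -x) = ⊤ :=
      top_le_iff.mp (hx ▸ apply_le_apply_zsmul_of_pos hf (-x) (by omega))
    calc f (n • x) = min (f (n • x)) (f ((n - 1) • -x)) := by rw [htop, min_top_right]
      _ ≤ f (n • x + (n - 1) • -x) := hf _ _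
      _ = f x := by rw [zsmul_neg, ← neg_zsmul, ← add_zsmul]; simp

theorem apply_add_eq_of_lt (hf : ∀ x y : G, min (f x) (f y) ≤ f (x + y)) {a b : G}
    (hb : f a < f b) (hb' : f a < f (-b)) : f (a + b) = f a := by
  refine le_antisymm ?_ ((le_min le_rfl hb.le).trans (hf a b))
  by_contra! h
  have := hf (a + b) (-b)
  rw [add_neg_cancel_right] at this
  exact this.not_gt (lt_min h hb')

theorem apply_add_sum_eq_of_lt (hf : ∀ x y : G, min (f x) (f y) ≤ f (x + y)) {ι : Type*}
    (a : G) (s : Finset ι) (g : ι → G) (hg : ∀ i ∈ s, f a < f (g i) ∧ f a < f (-g i)) :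
    f (a + ∑ i ∈ s, g i) = f a := by
  classical
  induction s using Finset.induction with
  | empty => rw [Finset.sum_empty, add_zero]
  | insert j s hj ih =>
    obtain ⟨hgj, hgj'⟩ := hg j (Finset.mem_insert_self j s)
    have ih := ih fun i hi ↦ hg i (Finset.mem_insert_of_mem hi)
    rw [Finset.sum_insert hj, add_left_comm, add_comm, apply_add_eq_of_lt hf] <;> rw [ih]
    exacts [hgj, hgj']

end MinSuperadditive

theorem stmt_3_general {G : Type*} [AddCommGroup G] (f : G → ℝ≥0∞)
    (hf : ∀ x y : G, min (f x) (f y) ≤ f (x + y))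
    (m : ℕ) (x : Fin (m + 1) → G) (n : Fin (m + 1) → ℤ)
    (hn : 0 < n (Fin.last m))
    (hneg : f (-(x (Fin.last m))) = ⊤)
    (hlt : ∀ k : Fin (m + 1), k ≠ Fin.last m →
      f (x (Fin.last m)) < f (x k) ∧ f (x (Fin.last m)) < f (-(x k))) :
    f (∑ k, n k • x k) = f (x (Fin.last m)) := by
  have hlast := apply_zsmul_eq_of_apply_neg_eq_top hf hneg hn
  rw [Fin.sum_univ_castSucc, add_comm, apply_add_sum_eq_of_lt hf, hlast]
  intro i _
  obtain ⟨hx, hx'⟩ := hlt i.castSucc (Fin.castSucc_ne_last i)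
  have hmin := hlast ▸ lt_min hx hx'
  rw [← neg_zsmul]
  exact ⟨hmin.trans_le (min_le_apply_zsmul hf _ _), hmin.trans_le (min_le_apply_zsmul hf _ _)⟩

/-- Abstract form of the theorem on linear combinations: with `m + 1` elements
`x 0, …, x (Fin.last m)` and integer coefficients `n k`, if `n (Fin.last m) > 0`,
`f (-(x (Fin.last m))) = ⊤`, and `f (x (Fin.last m)) < f (x k)` and
`f (x (Fin.last m)) < f (-(x k))` for every other index `k`, then
`f (∑ k, n k • x k) = f (x (Fin.last m))`. -/
theorem stmt_3 {G : Type*} [AddCommGroup G] (f : G → ℝ≥0∞)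
    (hf : ∀ x y : G, min (f x) (f y) ≤ f (x + y)) (h0 : f 0 = ⊤)
    (m : ℕ) (x : Fin (m + 1) → G) (n : Fin (m + 1) → ℤ)
    (hn : 0 < n (Fin.last m))
    (hneg : f (-(x (Fin.last m))) = ⊤)
    (hlt : ∀ k : Fin (m + 1), k ≠ Fin.last m →
      f (x (Fin.last m)) < f (x k) ∧ f (x (Fin.last m)) < f (-(x k))) :
    f (∑ k, n k • x k) = f (x (Fin.last m)) :=
  stmt_3_general f hf m x n hn hneg hlt
end

section
/- Let y₀, y₁, …, y_m ∈ G satisfy f(y₀) = ⊤, f(−y₀) < ⊤, and f(−y₀) < f(y_i), f(−y₀) < f(−y_i) for every 1 ≤ i ≤ m. Then for all integers n₀, n₁, …, n_m, the equality n₀ • y₀ = n₁ • y₁ + ⋯ + n_m • y_m implies n₀ = 0; in particular ℤy₀ ∩ (ℤy₁ + ⋯ + ℤy_m) = 0 in G. (Abstract form of the paper's re-proof of Furuta's theorem on Seifert homology spheres Σ(a₁,…,a_n).) -/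
open scoped ENNReal

/-!
For a function with `min (f x) (f y) ≤ f (x + y)`, the elements `x` with `c < f x` and
`c < f (-x)` form a subgroup once `c < f 0`. Taking `c = f (-y₀)`, this subgroup contains every
`yᵢ`, hence every integer combination of them. On the other hand `f` is `⊤` on the multiples
`k • y₀` with `k ≥ 0`, which forces `f (-(k • y₀)) ≤ f (-y₀)` for `k ≥ 1`; so no nonzero multiple
of `y₀` lies in the subgroup.
-/

section MinSuperadditive

variable {G α : Type*} [AddGroup G] [LinearOrder α]

def symmSuperlevelAddSubgroup (f : G → α) (hf : ∀ x y, min (f x) (f y) ≤ f (x + y))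
    (c : α) (hc : c < f 0) : AddSubgroup G where
  carrier := {x | c < f x ∧ c < f (-x)}
  zero_mem' := ⟨hc, by rwa [neg_zero]⟩
  add_mem' {x y} hx hy :=
    ⟨(lt_min hx.1 hy.1).trans_le (hf x y),
      by simpa only [neg_add_rev] using (lt_min hy.2 hx.2).trans_le (hf (-y) (-x))⟩
  neg_mem' {x} hx := ⟨hx.2, by rw [neg_neg]; exact hx.1⟩

theorem mem_symmSuperlevelAddSubgroup {f : G → α} {hf : ∀ x y, min (f x) (f y) ≤ f (x + y)}
    {c : α} {hc : c < f 0} {x : G} :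
    x ∈ symmSuperlevelAddSubgroup f hf c hc ↔ c < f x ∧ c < f (-x) :=
  Iff.rfl

variable [OrderTop α]

def topAddSubmonoid (f : G → α) (hf : ∀ x y, min (f x) (f y) ≤ f (x + y)) (h0 : f 0 = ⊤) :
    AddSubmonoid G where
  carrier := {x | f x = ⊤}
  zero_mem' := h0
  add_mem' {x y} (hx : f x = ⊤) (hy : f y = ⊤) :=
    top_le_iff.mp (by simpa only [hx, hy, min_self] using hf x y)

theorem le_apply_add_of_apply_eq_top {f : G → α} (hf : ∀ x y, min (f x) (f y) ≤ f (x + y))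
    {a b : G} (hb : f b = ⊤) : f a ≤ f (a + b) := by
  simpa [hb] using hf a b

theorem apply_neg_nsmul_le {f : G → α} (hf : ∀ x y, min (f x) (f y) ≤ f (x + y))
    (h0 : f 0 = ⊤) {y₀ : G} (hy₀ : f y₀ = ⊤) {k : ℕ} (hk : k ≠ 0) :
    f (-(k • y₀)) ≤ f (-y₀) := by
  obtain ⟨j, rfl⟩ := Nat.exists_eq_succ_of_ne_zero hk
  have hj : f (j • y₀) = ⊤ :=
    AddSubmonoid.nsmul_mem (topAddSubmonoid f hf h0) (show f y₀ = ⊤ from hy₀) j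
  calc f (-((j + 1) • y₀)) ≤ f (-((j + 1) • y₀) + j • y₀) := le_apply_add_of_apply_eq_top hf hj
    _ = f (-y₀) := by rw [succ_nsmul, neg_add_rev, neg_add_cancel_right]

end MinSuperadditive

/-- Abstract form of Furuta's theorem: if `f y₀ = ⊤`, `f (-y₀) < ⊤`, and
`f (-y₀) < f (y i)` and `f (-y₀) < f (-(y i))` for every `i`, then any relation
`n₀ • y₀ = ∑ i, n i • y i` forces `n₀ = 0`; i.e. `ℤ y₀ ∩ (ℤ y₁ + ⋯ + ℤ y_m) = 0`. -/
theorem stmt_4 {G : Type*} [AddCommGroup G] (f : G → ℝ≥0∞)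
    (hf : ∀ x y : G, min (f x) (f y) ≤ f (x + y)) (h0 : f 0 = ⊤)
    (m : ℕ) (y₀ : G) (y : Fin m → G)
    (hy₀ : f y₀ = ⊤) (hy₀' : f (-y₀) < ⊤)
    (hy : ∀ i : Fin m, f (-y₀) < f (y i) ∧ f (-y₀) < f (-(y i))) :
    ∀ (n₀ : ℤ) (n : Fin m → ℤ), n₀ • y₀ = ∑ i, n i • y i → n₀ = 0 := by
  intro n₀ n h
  by_contra hn₀
  set H := symmSuperlevelAddSubgroup f hf (f (-y₀)) (h0 ▸ hy₀')
  have hmem : n₀ • y₀ ∈ H := h ▸ H.sum_mem fun i _ => H.zsmul_mem (hy i) (n i)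
  obtain ⟨k, rfl | rfl⟩ := n₀.eq_nat_or_neg
  · have hle := apply_neg_nsmul_le hf h0 hy₀ (k := k) (by exact_mod_cast hn₀)
    rw [natCast_zsmul] at hmem
    exact (mem_symmSuperlevelAddSubgroup.mp hmem).2.not_ge hle
  · have hle := apply_neg_nsmul_le hf h0 hy₀ (k := k) (by simpa using hn₀)
    rw [neg_smul, natCast_zsmul] at hmem
    exact (mem_symmSuperlevelAddSubgroup.mp hmem).1.not_ge hle
end

section
/- Let (x_k)_{k ∈ ℕ} be a sequence in G such that f(x_k) < ⊤ for all k, f(x_{k+1}) < f(x_k) for all k (the values are strictly decreasing), and f(−x_k) = ⊤ for all k. Then the family (x_k) is linearly independent over ℤ: for every finitely supported function c : ℕ → ℤ with ∑_k c(k) • x_k = 0, one has c = 0. (Abstract form of the paper's Corollary giving linear independence in the homology cobordism group Θ³_ℤ.) -/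
/-!
Positive multiples of `y` have value at least `f y`; if moreover `f (-y) = ⊤`, the
nonpositive multiples have value `⊤` and the positive ones exactly `f y`. Given a relation
`∑ c k • x k = 0`, isolate the term of largest index `m`: both `c m • x m` and its negative are
sums of multiples of the `x k` with `k < m`, so both have value `> f (x m)`, while one of them
is a positive multiple of `x m` and has value exactly `f (x m)`.
-/

open scoped ENNReal

section MinSuperadditive

variable {G : Type*} [AddCommGroup G] {f : G → ℝ≥0∞}

lemma le_apply_succ_nsmul (hf : ∀ x y : G, min (f x) (f y) ≤ f (x + y)) (y : G) (n : ℕ) :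
    f y ≤ f ((n + 1) • y) := by
  induction n with
  | zero => simp
  | succ n ih => rw [succ_nsmul]; exact (le_min ih le_rfl).trans (hf _ _)

lemma apply_nsmul_eq_top (hf : ∀ x y : G, min (f x) (f y) ≤ f (x + y)) (h0 : f 0 = ⊤)
    {y : G} (hy : f y = ⊤) (n : ℕ) : f (n • y) = ⊤ := by
  cases n with
  | zero => rwa [zero_nsmul]
  | succ n => exact top_le_iff.mp (hy ▸ le_apply_succ_nsmul hf y n)

lemma apply_zsmul_eq_top_of_nonpos (hf : ∀ x y : G, min (f x) (f y) ≤ f (x + y))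
    (h0 : f 0 = ⊤) {y : G} (hy : f (-y) = ⊤) {z : ℤ} (hz : z ≤ 0) : f (z • y) = ⊤ := by
  obtain ⟨n, rfl⟩ := Int.exists_eq_neg_ofNat hz
  rw [neg_zsmul, natCast_zsmul, ← smul_neg]
  exact apply_nsmul_eq_top hf h0 hy n

lemma le_apply_zsmul (hf : ∀ x y : G, min (f x) (f y) ≤ f (x + y)) (h0 : f 0 = ⊤)
    {y : G} (hy : f (-y) = ⊤) (z : ℤ) : f y ≤ f (z • y) := by
  rcases le_or_gt z 0 with hz | hz
  · rw [apply_zsmul_eq_top_of_nonpos hf h0 hy hz]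
    exact le_top
  · obtain ⟨n, rfl⟩ : ∃ n : ℕ, z = n + 1 := ⟨(z - 1).toNat, by omega⟩
    rw [← Nat.cast_succ, natCast_zsmul]
    exact le_apply_succ_nsmul hf y n

lemma apply_zsmul_le_of_pos (hf : ∀ x y : G, min (f x) (f y) ≤ f (x + y)) (h0 : f 0 = ⊤)
    {y : G} (hy : f (-y) = ⊤) {z : ℤ} (hz : 0 < z) : f (z • y) ≤ f y := by
  have hsplit : z • y + (1 - z) • y = y := by rw [← add_zsmul, add_sub_cancel, one_zsmul]
  have hrest : f ((1 - z) • y) = ⊤ := apply_zsmul_eq_top_of_nonpos hf h0 hy (by omega)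
  simpa [hsplit, hrest] using hf (z • y) ((1 - z) • y)

lemma min_apply_zsmul_apply_neg_le (hf : ∀ x y : G, min (f x) (f y) ≤ f (x + y))
    (h0 : f 0 = ⊤) {y : G} (hy : f (-y) = ⊤) {z : ℤ} (hz : z ≠ 0) :
    min (f (z • y)) (f (-(z • y))) ≤ f y := by
  rcases hz.lt_or_gt with hz | hz
  · rw [← neg_zsmul]
    exact (min_le_right _ _).trans (apply_zsmul_le_of_pos hf h0 hy (neg_pos.mpr hz))
  · exact (min_le_left _ _).trans (apply_zsmul_le_of_pos hf h0 hy hz)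

lemma inf_le_apply_sum (hf : ∀ x y : G, min (f x) (f y) ≤ f (x + y)) (h0 : f 0 = ⊤)
    {ι : Type*} (s : Finset ι) (g : ι → G) : s.inf (fun i => f (g i)) ≤ f (∑ i ∈ s, g i) := by
  induction s using Finset.cons_induction with
  | empty => simp [h0]
  | cons a s ha ih =>
    rw [Finset.inf_cons, Finset.sum_cons]
    exact (inf_le_inf_left _ ih).trans (hf _ _)

lemma lt_apply_sum_zsmul (hf : ∀ x y : G, min (f x) (f y) ≤ f (x + y)) (h0 : f 0 = ⊤)
    {ι : Type*} {s : Finset ι} {x : ι → G} (hneg : ∀ k ∈ s, f (-x k) = ⊤) {b : ℝ≥0∞}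
    (hb : b < ⊤) (hlt : ∀ k ∈ s, b < f (x k)) (d : ι → ℤ) :
    b < f (∑ k ∈ s, d k • x k) :=
  ((Finset.lt_inf_iff hb).mpr fun k hk =>
    (hlt k hk).trans_le (le_apply_zsmul hf h0 (hneg k hk) (d k))).trans_le
    (inf_le_apply_sum hf h0 s _)

end MinSuperadditive

/-- Abstract form of the corollary on linear independence: a sequence `x : ℕ → G` with
`f (x k) < ⊤` for all `k`, strictly decreasing values `f (x (k+1)) < f (x k)`, and
`f (-(x k)) = ⊤` for all `k`, is linearly independent over `ℤ`: any finitely supported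
`c : ℕ →₀ ℤ` with `∑ k, c k • x k = 0` is zero. -/
theorem stmt_5 {G : Type*} [AddCommGroup G] (f : G → ℝ≥0∞)
    (hf : ∀ x y : G, min (f x) (f y) ≤ f (x + y)) (h0 : f 0 = ⊤)
    (x : ℕ → G)
    (hfin : ∀ k : ℕ, f (x k) < ⊤)
    (hdec : ∀ k : ℕ, f (x (k + 1)) < f (x k))
    (hneg : ∀ k : ℕ, f (-(x k)) = ⊤) :
    ∀ c : ℕ →₀ ℤ, (c.sum fun k n => n • x k) = 0 → c = 0 := by
  intro c hc
  by_contra hne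
  have hs : c.support.Nonempty := Finsupp.support_nonempty_iff.mpr hne
  set m := c.support.max' hs
  have hm : m ∈ c.support := c.support.max'_mem hs
  have hanti : StrictAnti fun k => f (x k) := strictAnti_nat_of_succ_lt hdec
  have hlt : ∀ k ∈ c.support.erase m, f (x m) < f (x k) := fun k hk =>
    hanti <| (c.support.le_max' k (Finset.mem_of_mem_erase hk)).lt_of_ne
      (Finset.ne_of_mem_erase hk)
  set S := ∑ k ∈ c.support.erase m, c k • x k
  have hS : c m • x m = -S := by
    rw [Finsupp.sum, ← Finset.add_sum_erase _ _ hm] at hc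
    exact eq_neg_of_add_eq_zero_left hc
  have hneg' : ∀ k ∈ c.support.erase m, f (-x k) = ⊤ := fun k _ => hneg k
  have hS_pos : f (x m) < f S := lt_apply_sum_zsmul hf h0 hneg' (hfin m) hlt c
  have hS_neg : f (x m) < f (-S) := by
    simpa only [neg_zsmul, Finset.sum_neg_distrib] using
      lt_apply_sum_zsmul hf h0 hneg' (hfin m) hlt (fun k => -c k)
  have hmin := min_apply_zsmul_apply_neg_le hf h0 (hneg m) (Finsupp.mem_support_iff.mp hm)
  rw [hS, neg_neg] at hmin
  exact (lt_min hS_neg hS_pos).not_ge hmin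
end

section
/- Fix r ∈ (0,∞] and set G_r := {z ∈ G : r ≤ f(z) and r ≤ f(−z)}. Let (x_k)_{k ∈ ℕ} be a sequence in G with f(x_k) = ⊤ for all k, f(−x_{k+1}) < f(−x_k) for all k (the values f(−x_k) are strictly decreasing), and f(−x_0) < r. Then for every finitely supported function c : ℕ → ℤ, if ∑_k c(k) • x_k ∈ G_r then c = 0; in particular the images of the x_k in the quotient group G/G_r are linearly independent over ℤ, so G/G_r contains ℤ^∞ as a subgroup. (Abstract form of the paper's Theorem that Θ³_ℤ/Θ³_{ℤ,r} contains ℤ^∞ for every r ∈ (0,∞].) -/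
/-!
Suppose `c ≠ 0` and let `j` be the largest index with `c j ≠ 0`; replacing `c` by `-c` we may
assume `c j > 0`. With `B = f (-x j) < r`, the elements `z` with `B < f z` form an additive
submonoid containing every `x k`, every `-x k` for `k < j`, and `-∑ c k • x k`. Writing
`-x j = -∑ c k • x k + (c j - 1) • x j + ∑_{k < j} c k • x k` puts `-x j` in it, which is absurd.
-/

open scoped ENNReal

section Superlevel

variable {G : Type*} [AddCommGroup G] (f : G → ℝ≥0∞)

def superlevelAddSubmonoid (hf : ∀ x y : G, min (f x) (f y) ≤ f (x + y)) {B : ℝ≥0∞}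
    (hB : B < f 0) : AddSubmonoid G where
  carrier := {z | B < f z}
  add_mem' {x y} hx hy := (lt_min hx hy).trans_le (hf x y)
  zero_mem' := hB

variable {f}

@[simp]
lemma mem_superlevelAddSubmonoid {hf : ∀ x y : G, min (f x) (f y) ≤ f (x + y)} {B : ℝ≥0∞}
    {hB : B < f 0} {z : G} : z ∈ superlevelAddSubmonoid f hf hB ↔ B < f z :=
  Iff.rfl

end Superlevel

lemma AddSubmonoid.zsmul_mem_of_neg_mem {G : Type*} [AddGroup G] (S : AddSubmonoid G) {y : G}
    (hy : y ∈ S) (hny : -y ∈ S) (n : ℤ) : n • y ∈ S := by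
  cases n with
  | ofNat n => simpa using S.nsmul_mem hy n
  | negSucc n => simpa [negSucc_zsmul, ← neg_nsmul] using S.nsmul_mem hny (n + 1)

lemma AddSubmonoid.zsmul_mem_of_nonneg {G : Type*} [AddGroup G] (S : AddSubmonoid G) {y : G}
    (hy : y ∈ S) {n : ℤ} (hn : 0 ≤ n) : n • y ∈ S := by
  lift n to ℕ using hn
  simpa using S.nsmul_mem hy n

lemma apply_neg_linearCombination_le_of_leadingCoeff_pos {G : Type*} [AddCommGroup G]
    {f : G → ℝ≥0∞}
    (hf : ∀ x y : G, min (f x) (f y) ≤ f (x + y)) (h0 : f 0 = ⊤) {x : ℕ → G}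
    (htop : ∀ k, f (x k) = ⊤) (hanti : StrictAnti fun k => f (-(x k))) {c : ℕ →₀ ℤ} {j : ℕ}
    (hj : ∀ k ∈ c.support, k ≤ j) (hcj : 0 < c j) :
    f (-(Finsupp.linearCombination ℤ x c)) ≤ f (-(x j)) := by
  by_contra! hlt
  set S := superlevelAddSubmonoid f hf (h0 ▸ hlt.trans_le le_top)
  have hx : ∀ k, x k ∈ S := fun k => by simp [S, htop k, hlt.trans_le le_top]
  set c' : ℕ →₀ ℤ := c - Finsupp.single j 1 with hc'
  have hterm : ∀ k, c' k • x k ∈ S := by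
    intro k
    rcases lt_trichotomy k j with hkj | rfl | hjk
    · exact S.zsmul_mem_of_neg_mem (hx k) (hanti hkj) _
    · refine S.zsmul_mem_of_nonneg (hx k) ?_
      simp only [hc', Finsupp.coe_sub, Pi.sub_apply, Finsupp.single_eq_same]
      omega
    · have hck : c k = 0 := Finsupp.notMem_support_iff.mp fun hk => (hj k hk).not_gt hjk
      simp [hc', hck, hjk.ne, S.zero_mem]
  have hrest : Finsupp.linearCombination ℤ x c' ∈ S := by
    rw [Finsupp.linearCombination_apply]
    exact AddSubmonoidClass.finsuppSum_mem _ _ _ fun k _ => hterm k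
  have hsplit : -(x j) = -(Finsupp.linearCombination ℤ x c) +
      Finsupp.linearCombination ℤ x c' := by
    simp only [hc', map_sub, Finsupp.linearCombination_single, one_smul]
    abel
  have : -(x j) ∈ S := hsplit ▸ S.add_mem hlt hrest
  exact lt_irrefl _ (mem_superlevelAddSubmonoid.mp this)

theorem stmt_7_general {G : Type*} [AddCommGroup G] (f : G → ℝ≥0∞)
    (hf : ∀ x y : G, min (f x) (f y) ≤ f (x + y)) (h0 : f 0 = ⊤)
    (r : ℝ≥0∞)
    (x : ℕ → G)
    (htop : ∀ k : ℕ, f (x k) = ⊤)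
    (hdec : ∀ k : ℕ, f (-(x (k + 1))) < f (-(x k)))
    (h0r : f (-(x 0)) < r) :
    ∀ c : ℕ →₀ ℤ,
      (c.sum fun k n => n • x k) ∈ {z : G | r ≤ f z ∧ r ≤ f (-z)} → c = 0 := by
  intro c ⟨hz, hnz⟩
  rw [← Finsupp.linearCombination_apply] at hz hnz
  by_contra hc
  have hanti : StrictAnti fun k => f (-(x k)) := strictAnti_nat_of_succ_lt hdec
  have hsupp : c.support.Nonempty := Finsupp.support_nonempty_iff.mpr hc
  set j := c.support.max' hsupp
  have hj : ∀ k ∈ c.support, k ≤ j := fun k hk => c.support.le_max' k hk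
  have hjr : f (-(x j)) < r := (hanti.antitone j.zero_le).trans_lt h0r
  rcases (Finsupp.mem_support_iff.mp (c.support.max'_mem hsupp)).lt_or_gt with hneg | hpos
  · have := apply_neg_linearCombination_le_of_leadingCoeff_pos hf h0 htop hanti (c := -c)
      (by simpa using hj) (by simpa using hneg)
    rw [map_neg, neg_neg] at this
    exact (hz.trans this).not_gt hjr
  · have := apply_neg_linearCombination_le_of_leadingCoeff_pos hf h0 htop hanti hj hpos
    exact (hnz.trans this).not_gt hjr

/-- Abstract form of the theorem that `Θ³_ℤ/Θ³_{ℤ,r}` contains `ℤ^∞`: fix `r ∈ (0,∞]` and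
let `G_r = {z : r ≤ f z ∧ r ≤ f (-z)}`.  If `f (x k) = ⊤` for all `k`, the values
`f (-(x k))` are strictly decreasing, and `f (-(x 0)) < r`, then any finitely supported
`c : ℕ →₀ ℤ` with `∑ k, c k • x k ∈ G_r` is zero; hence the images of the `x k` in
`G / G_r` are linearly independent over `ℤ`. -/
theorem stmt_7 {G : Type*} [AddCommGroup G] (f : G → ℝ≥0∞)
    (hf : ∀ x y : G, min (f x) (f y) ≤ f (x + y)) (h0 : f 0 = ⊤)
    (r : ℝ≥0∞) (hr : 0 < r)
    (x : ℕ → G)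
    (htop : ∀ k : ℕ, f (x k) = ⊤)
    (hdec : ∀ k : ℕ, f (-(x (k + 1))) < f (-(x k)))
    (h0r : f (-(x 0)) < r) :
    ∀ c : ℕ →₀ ℤ,
      (c.sum fun k n => n • x k) ∈ {z : G | r ≤ f z ∧ r ≤ f (-z)} → c = 0 :=
  stmt_7_general f hf h0 r x htop hdec h0r
end

section
/- Define σ : G → EReal by σ(x) := sup{ (s : EReal) : s ∈ ℝ, s ≤ 0, and R(x, s) = ⊤ } (the supremum of the empty set being −∞). Then for all x, y ∈ G one has σ(x + y) ≥ σ(x) + σ(y). (Abstract form of the paper's Theorem: s_∞(Y₁ # Y₂) ≥ s_∞(Y₁) + s_∞(Y₂), where s_∞(Y) = sup{s ∈ [−∞,0] : r_s(Y) = ∞}.) -/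
/-! An `s ≤ 0` with `R x s = ⊤` and an `s'` with `R y s' = ⊤` give `R (x + y) (s + s') = ⊤`,
because the connected-sum inequality bounds `R (x + y) (s + s')` below by `min (⊤ + s') (⊤ + s)`.
So the set defining `σ (x + y)` contains the pointwise sum of the sets defining `σ x` and `σ y`. -/

lemma EReal.sSup_add_sSup_le {A B : Set EReal} {c : EReal}
    (h : ∀ a ∈ A, ∀ b ∈ B, a + b ≤ c) : sSup A + sSup B ≤ c := by
  refine EReal.add_le_of_forall_lt fun a' ha' b' hb' ↦ ?_
  obtain ⟨a, ha, ha'a⟩ := lt_sSup_iff.mp ha'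
  obtain ⟨b, hb, hb'b⟩ := lt_sSup_iff.mp hb'
  exact (add_le_add ha'a.le hb'b.le).trans (h a ha b hb)

lemma eq_top_of_min_add_coe_le {r₁ r₂ r : EReal} {s₁ s₂ : ℝ}
    (h : min (r₁ + (s₂ : EReal)) (r₂ + (s₁ : EReal)) ≤ r) (h₁ : r₁ = ⊤) (h₂ : r₂ = ⊤) :
    r = ⊤ := by
  rw [h₁, h₂, EReal.top_add_coe, EReal.top_add_coe, min_self] at h
  exact top_le_iff.mp h

theorem stmt_8_general {G : Type*} [AddCommGroup G] (R : G → ℝ → EReal)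
    (hconn : ∀ (x y : G) (s₁ s₂ : ℝ), s₁ ≤ 0 → s₂ ≤ 0 →
      min (R x s₁ + (s₂ : EReal)) (R y s₂ + (s₁ : EReal)) ≤ R (x + y) (s₁ + s₂))
    (σ : G → EReal)
    (hσ : ∀ x : G, σ x = sSup {e : EReal | ∃ s : ℝ, e = (s : EReal) ∧ s ≤ 0 ∧ R x s = ⊤}) :
    ∀ x y : G, σ x + σ y ≤ σ (x + y) := by
  intro x y
  rw [hσ x, hσ y, hσ (x + y)]
  refine EReal.sSup_add_sSup_le ?_
  rintro _ ⟨s₁, rfl, hs₁, htop₁⟩ _ ⟨s₂, rfl, hs₂, htop₂⟩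
  refine le_sSup ⟨s₁ + s₂, (EReal.coe_add s₁ s₂).symm, by linarith, ?_⟩
  exact eq_top_of_min_add_coe_le (hconn x y s₁ s₂ hs₁ hs₂) htop₁ htop₂

/-- Abstract form of the theorem `s_∞(Y₁ # Y₂) ≥ s_∞(Y₁) + s_∞(Y₂)`: let
`R : G → ℝ → EReal` be antitone in the second variable on nonpositive arguments and
satisfy the connected-sum inequality; define
`σ x = sup {(s : EReal) : s ∈ ℝ, s ≤ 0, R x s = ⊤}` (the sup of the empty set being
`⊥ = -∞`).  Then `σ (x + y) ≥ σ x + σ y` for all `x, y`. -/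
theorem stmt_8 {G : Type*} [AddCommGroup G] (R : G → ℝ → EReal)
    (hmono : ∀ (x : G) (s s' : ℝ), s ≤ s' → s' ≤ 0 → R x s' ≤ R x s)
    (hconn : ∀ (x y : G) (s₁ s₂ : ℝ), s₁ ≤ 0 → s₂ ≤ 0 →
      min (R x s₁ + (s₂ : EReal)) (R y s₂ + (s₁ : EReal)) ≤ R (x + y) (s₁ + s₂))
    (σ : G → EReal)
    (hσ : ∀ x : G, σ x = sSup {e : EReal | ∃ s : ℝ, e = (s : EReal) ∧ s ≤ 0 ∧ R x s = ⊤}) :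
    ∀ x y : G, σ x + σ y ≤ σ (x + y) :=
  stmt_8_general R hconn σ hσ
end

section
/- Let D₁, D₀ be ℚ-vector spaces with a linear map ∂_D : D₁ → D₀ and a linear functional θ_D : D₁ → ℚ, and let CW₁ : D₁ → E₁, CW₀ : D₀ → E₀ and f : D₀ → ℚ be linear maps satisfying ∂_E ∘ CW₁ = CW₀ ∘ ∂_D and θ_D + f ∘ ∂_D = Θ_E ∘ CW₁. If there exist linear functionals f_B : B₀ → ℚ and f_C : C₀ → ℚ with θ_B = f_B ∘ ∂_B and θ_C = f_C ∘ ∂_C (i.e. θ_B and θ_C are coboundaries), then there exists a linear functional g : D₀ → ℚ with θ_D = g ∘ ∂_D (i.e. θ_D is a coboundary). (This is the algebraic core of the paper's Theorem that if the obstruction classes of Y₁ and Y₂ are coboundaries then so is that of Y₁ # Y₂, yielding the connected sum formula for r_s.) -/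
open TensorProduct

/-!
If `θ_B = f_B ∘ ∂_B` and `θ_C = f_C ∘ ∂_C`, then `Θ_E = G ∘ ∂_E` for the functional
`G (w, b, c) = f_B b + f_C c - (f_B ⊗ f_C) w` on `E₀`: the cross terms `(id ⊗ θ_C) v` and
`(θ_B ⊗ id) u` are cancelled by `(f_B ⊗ f_C)` applied to `(id ⊗ ∂_C) v` and `(∂_B ⊗ id) u`.
A chain map pulls a coboundary back to a coboundary, so `θ_D = (G ∘ CW₀ - f) ∘ ∂_D`.
-/

section ChainMap

variable {R D₁ D₀ E₁ E₀ : Type*} [CommRing R]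
  [AddCommGroup D₁] [Module R D₁] [AddCommGroup D₀] [Module R D₀]
  [AddCommGroup E₁] [Module R E₁] [AddCommGroup E₀] [Module R E₀]

theorem eq_comp_of_chain_map_of_eq_comp {dD : D₁ →ₗ[R] D₀} {dE : E₁ →ₗ[R] E₀}
    {CW₁ : D₁ →ₗ[R] E₁} {CW₀ : D₀ →ₗ[R] E₀} (hcomm : dE ∘ₗ CW₁ = CW₀ ∘ₗ dD)
    {θD : D₁ →ₗ[R] R} {f : D₀ →ₗ[R] R} {ΘE : E₁ →ₗ[R] R} {G : E₀ →ₗ[R] R}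
    (htheta : θD + f ∘ₗ dD = ΘE ∘ₗ CW₁) (hΘE : ΘE = G ∘ₗ dE) :
    θD = (G ∘ₗ CW₀ - f) ∘ₗ dD := by
  rw [LinearMap.sub_comp, LinearMap.comp_assoc, ← hcomm, ← LinearMap.comp_assoc, ← hΘE,
    ← htheta, add_sub_cancel_right]

end ChainMap

section TensorFunctional

variable {R B₁ B₀ C₁ C₀ : Type*} [CommRing R]
  [AddCommGroup B₁] [Module R B₁] [AddCommGroup B₀] [Module R B₀]
  [AddCommGroup C₁] [Module R C₁] [AddCommGroup C₀] [Module R C₀]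

theorem mul'_map_lTensor_apply (fB : B₀ →ₗ[R] R) (fC : C₀ →ₗ[R] R) (dC : C₁ →ₗ[R] C₀)
    (v : B₀ ⊗[R] C₁) :
    LinearMap.mul' R R (map fB fC (map LinearMap.id dC v)) =
      fB ((TensorProduct.rid R B₀).toLinearMap (LinearMap.lTensor B₀ (fC ∘ₗ dC) v)) := by
  refine LinearMap.congr_fun (TensorProduct.ext' fun b c => ?_ :
    (LinearMap.mul' R R ∘ₗ map fB fC ∘ₗ map LinearMap.id dC) =
      fB ∘ₗ (TensorProduct.rid R B₀).toLinearMap ∘ₗ LinearMap.lTensor B₀ (fC ∘ₗ dC)) v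
  simp [mul_comm]

theorem mul'_map_rTensor_apply (fB : B₀ →ₗ[R] R) (fC : C₀ →ₗ[R] R) (dB : B₁ →ₗ[R] B₀)
    (u : B₁ ⊗[R] C₀) :
    LinearMap.mul' R R (map fB fC (map dB LinearMap.id u)) =
      fC ((TensorProduct.lid R C₀).toLinearMap (LinearMap.rTensor C₀ (fB ∘ₗ dB) u)) := by
  refine LinearMap.congr_fun (TensorProduct.ext' fun b c => ?_ :
    (LinearMap.mul' R R ∘ₗ map fB fC ∘ₗ map dB LinearMap.id) =
      fC ∘ₗ (TensorProduct.lid R C₀).toLinearMap ∘ₗ LinearMap.rTensor C₀ (fB ∘ₗ dB)) u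
  simp

def tensorPrimitive (fB : B₀ →ₗ[R] R) (fC : C₀ →ₗ[R] R) : (B₀ ⊗[R] C₀) × B₀ × C₀ →ₗ[R] R :=
  (-(LinearMap.mul' R R ∘ₗ map fB fC)).coprod (fB.coprod fC)

theorem tensorPrimitive_apply_differential (fB : B₀ →ₗ[R] R) (fC : C₀ →ₗ[R] R)
    (dB : B₁ →ₗ[R] B₀) (dC : C₁ →ₗ[R] C₀) (u : B₁ ⊗[R] C₀) (v : B₀ ⊗[R] C₁) (b : B₁) (c : C₁) :
    tensorPrimitive fB fC
        (map dB LinearMap.id u + map LinearMap.id dC v,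
         (TensorProduct.rid R B₀).toLinearMap (LinearMap.lTensor B₀ (fC ∘ₗ dC) v) + dB b,
         (TensorProduct.lid R C₀).toLinearMap (LinearMap.rTensor C₀ (fB ∘ₗ dB) u) + dC c) =
      fB (dB b) + fC (dC c) := by
  simp only [tensorPrimitive, LinearMap.coprod_apply, LinearMap.neg_apply, LinearMap.comp_apply,
    map_add, mul'_map_lTensor_apply, mul'_map_rTensor_apply]
  ring

end TensorFunctional

/-- Algebraic core of the connected sum formula: with
`E₁ = (B₁ ⊗ C₀) × (B₀ ⊗ C₁) × B₁ × C₁` and `E₀ = (B₀ ⊗ C₀) × B₀ × C₀`, the differential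
`∂_E (u, v, b, c) = ((∂_B ⊗ id) u + (id ⊗ ∂_C) v, (id ⊗ θ_C) v + ∂_B b, (θ_B ⊗ id) u + ∂_C c)`
and functional `Θ_E (u, v, b, c) = θ_B b + θ_C c`; if `∂_E ∘ CW₁ = CW₀ ∘ ∂_D`,
`θ_D + f ∘ ∂_D = Θ_E ∘ CW₁`, and `θ_B`, `θ_C` are coboundaries, then `θ_D` is a
coboundary. -/
theorem stmt_13
    (B₁ B₀ C₁ C₀ D₁ D₀ : Type*)
    [AddCommGroup B₁] [Module ℚ B₁] [AddCommGroup B₀] [Module ℚ B₀]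
    [AddCommGroup C₁] [Module ℚ C₁] [AddCommGroup C₀] [Module ℚ C₀]
    [AddCommGroup D₁] [Module ℚ D₁] [AddCommGroup D₀] [Module ℚ D₀]
    (dB : B₁ →ₗ[ℚ] B₀) (dC : C₁ →ₗ[ℚ] C₀)
    (θB : B₁ →ₗ[ℚ] ℚ) (θC : C₁ →ₗ[ℚ] ℚ)
    (dE : ((B₁ ⊗[ℚ] C₀) × (B₀ ⊗[ℚ] C₁) × B₁ × C₁) →ₗ[ℚ] ((B₀ ⊗[ℚ] C₀) × B₀ × C₀))
    (hdE : ∀ (u : B₁ ⊗[ℚ] C₀) (v : B₀ ⊗[ℚ] C₁) (b : B₁) (c : C₁),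
      dE (u, v, b, c) =
        (TensorProduct.map dB LinearMap.id u + TensorProduct.map LinearMap.id dC v,
         (TensorProduct.rid ℚ B₀).toLinearMap (LinearMap.lTensor B₀ θC v) + dB b,
         (TensorProduct.lid ℚ C₀).toLinearMap (LinearMap.rTensor C₀ θB u) + dC c))
    (ΘE : ((B₁ ⊗[ℚ] C₀) × (B₀ ⊗[ℚ] C₁) × B₁ × C₁) →ₗ[ℚ] ℚ)
    (hΘE : ∀ (u : B₁ ⊗[ℚ] C₀) (v : B₀ ⊗[ℚ] C₁) (b : B₁) (c : C₁),
      ΘE (u, v, b, c) = θB b + θC c)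
    (dD : D₁ →ₗ[ℚ] D₀) (θD : D₁ →ₗ[ℚ] ℚ)
    (CW₁ : D₁ →ₗ[ℚ] ((B₁ ⊗[ℚ] C₀) × (B₀ ⊗[ℚ] C₁) × B₁ × C₁))
    (CW₀ : D₀ →ₗ[ℚ] ((B₀ ⊗[ℚ] C₀) × B₀ × C₀))
    (f : D₀ →ₗ[ℚ] ℚ)
    (hcomm : dE.comp CW₁ = CW₀.comp dD)
    (htheta : θD + f.comp dD = ΘE.comp CW₁)
    (hB : ∃ fB : B₀ →ₗ[ℚ] ℚ, θB = fB.comp dB)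
    (hC : ∃ fC : C₀ →ₗ[ℚ] ℚ, θC = fC.comp dC) :
    ∃ g : D₀ →ₗ[ℚ] ℚ, θD = g.comp dD := by
  obtain ⟨fB, rfl⟩ := hB
  obtain ⟨fC, rfl⟩ := hC
  have hΘE_coboundary : ΘE = tensorPrimitive fB fC ∘ₗ dE := by
    refine LinearMap.ext fun ⟨u, v, b, c⟩ => ?_
    rw [LinearMap.comp_apply, hdE, hΘE, tensorPrimitive_apply_differential]
    rfl
  exact ⟨_, eq_comp_of_chain_map_of_eq_comp hcomm htheta hΘE_coboundary⟩
end
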